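/- Let D = dℓ² be a discriminant, with d a fundamental discriminant and ℓ ∈ ℤ_{>0}, and let χ_d be the real primitive Dirichlet character of modulus |d| given by the Kronecker symbol (d | ·). Then for all complex s with Re(s) > 1, Σ_{m≥1} ψ_D(m) m^{−s} = L(s, χ_d) · ∏_{p | ℓ} (1 + (1 − χ_d(p)) Σ_{j=1}^{ord_p(ℓ)} p^{−js}), where L(s, χ_d) is the Dirichlet L-function of χ_d and ord_p(ℓ) is the p-adic valuation of ℓ. -/

import Mathlib

open scoped BigOperators Real

/-- An integer is a *discriminant* if it is congruent to 0 or 1 mod 4. -/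
def IsDiscriminant (D : ℤ) : Prop := D % 4 = 0 ∨ D % 4 = 1

/-- A *fundamental discriminant* (including `1`, for positive square discriminants). -/
def IsFundamentalDiscriminant (d : ℤ) : Prop :=
  (Squarefree d ∧ d % 4 = 1) ∨
    (∃ m : ℤ, d = 4 * m ∧ Squarefree m ∧ (m % 4 = 2 ∨ m % 4 = 3))

/-- The Kronecker symbol `(d | m)` for `m > 0`, defined by complete multiplicativity in `m`
from the Jacobi symbol on the odd part and the standard value at `2`. -/
noncomputable def kron (d : ℤ) (m : ℕ) : ℤ :=
  (if d % 2 = 0 then 0 else if d % 8 = 1 ∨ d % 8 = 7 then 1 else -1) ^ (m.factorization 2) *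
    jacobiSym d (m / 2 ^ (m.factorization 2))

-- `ψ_D(m) = (d | m / gcd(m, ℓ))` where `D = d ℓ²` with `d` a fundamental discriminant,
-- with the convention `ψ_0(m) = 1`.
open Classical in
noncomputable def psi (D : ℤ) (m : ℕ) : ℤ :=
  if D = 0 then 1
  else if h : ∃ p : ℤ × ℕ, IsFundamentalDiscriminant p.1 ∧ D = p.1 * (p.2 : ℤ) ^ 2 then
    kron h.choose.1 (m / m.gcd h.choose.2)
  else 0

/-- `ψ̄_t(m) = φ(m²)⁻¹ ∑_{n mod m², (n,m)=1} ψ_{t²-4n}(m)`. -/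
noncomputable def psibar (t : ℤ) (m : ℕ) : ℝ :=
  (Nat.totient (m ^ 2) : ℝ)⁻¹ *
    ∑ n ∈ Finset.range (m ^ 2), if Nat.gcd n m = 1 then (psi (t ^ 2 - 4 * n) m : ℝ) else 0

/-- `L(1, ψ_D) = ∑_{m ≥ 1} ψ_D(m)/m`, as the limit of the partial sums
(the series is in general only conditionally convergent). -/
noncomputable def LpsiOne (D : ℤ) : ℝ :=
  Filter.limUnder Filter.atTop (fun X : ℕ => ∑ m ∈ Finset.Icc 1 X, (psi D m : ℝ) / m)

/-- `L(1, ψ̄_t) = ∑_{m ≥ 1} ψ̄_t(m)/m`. -/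
noncomputable def LpsibarOne (t : ℤ) : ℝ := ∑' m : ℕ, psibar t (m + 1) / (m + 1)

/-!
`ψ_D(m) = χ_d(m / gcd(m, ℓ))` is multiplicative, and it is the Dirichlet convolution `χ_d * g`
of `χ_d` with the multiplicative function `g` supported on the divisors of `ℓ` with
`g(p^j) = 1 - χ_d(p)` for `1 ≤ j ≤ v_p(ℓ)`: on `p^k` the convolution telescopes to
`χ_d(p)^(k - min(k, v_p(ℓ)))`. Hence `L(s, ψ_D) = L(s, χ_d) L(s, g)`, and the finite Dirichlet
polynomial `L(s, g)` factors over the primes dividing `ℓ`. The only input about fundamental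
discriminants is that `D = dℓ²` determines `d` and `ℓ`, because the square part of a fundamental
discriminant divides `4`.
-/

lemma kron_one (d : ℤ) : kron d 1 = 1 := by
  simp [kron]

lemma kron_mul (d : ℤ) {m n : ℕ} (hm : m ≠ 0) (hn : n ≠ 0) :
    kron d (m * n) = kron d m * kron d n := by
  rw [kron, kron, kron, Nat.ordCompl_mul,
    jacobiSym.mul_right' d (Nat.ordCompl_pos 2 hm).ne' (Nat.ordCompl_pos 2 hn).ne',
    Nat.factorization_mul hm hn, Finsupp.add_apply, pow_add]
  ring

lemma abs_kron_le_one (d : ℤ) (m : ℕ) : |kron d m| ≤ 1 := by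
  rw [kron, abs_mul, abs_pow]
  refine mul_le_one₀ (pow_le_one₀ (abs_nonneg _) ?_) (abs_nonneg _) ?_
  · split_ifs <;> simp
  · rcases jacobiSym.trichotomy d (m / 2 ^ m.factorization 2) with h | h | h <;> simp [h]

-- `kron d 0 = 1`, so `kron d` itself is not multiplicative at `0`.
noncomputable def kronChar (d : ℤ) : ℕ →*₀ ℂ where
  toFun n := if n = 0 then 0 else kron d n
  map_zero' := if_pos rfl
  map_one' := by simp [kron_one]
  map_mul' m n := by
    rcases eq_or_ne m 0 with rfl | hm
    · simp
    rcases eq_or_ne n 0 with rfl | hn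
    · simp
    simp [hm, hn, kron_mul d hm hn]

lemma kronChar_of_ne_zero (d : ℤ) {n : ℕ} (hn : n ≠ 0) : kronChar d n = kron d n :=
  if_neg hn

lemma norm_kronChar_le_one (d : ℤ) (n : ℕ) : ‖kronChar d n‖ ≤ 1 := by
  rcases eq_or_ne n 0 with rfl | hn
  · simp
  rw [kronChar_of_ne_zero d hn, Complex.norm_intCast]
  exact_mod_cast abs_kron_le_one d n

lemma Squarefree.eq_one_of_natCast_sq_dvd {m : ℤ} (hm : Squarefree m) {a : ℕ}
    (h : (a : ℤ) ^ 2 ∣ m) : a = 1 := by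
  simpa using Int.isUnit_iff_natAbs_eq.mp (hm a (by rwa [← sq]))

namespace IsFundamentalDiscriminant

lemma ne_zero {d : ℤ} (hd : IsFundamentalDiscriminant d) : d ≠ 0 := by
  rcases hd with ⟨hsq, -⟩ | ⟨m, rfl, hsq, -⟩
  · exact hsq.ne_zero
  · exact mul_ne_zero four_ne_zero hsq.ne_zero

lemma eq_one_or_two_of_sq_dvd {d : ℤ} (hd : IsFundamentalDiscriminant d) {a : ℕ}
    (h : (a : ℤ) ^ 2 ∣ d) : a = 1 ∨ a = 2 := by
  rcases hd with ⟨hsq, -⟩ | ⟨m, rfl, hsq, -⟩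
  · exact Or.inl (hsq.eq_one_of_natCast_sq_dvd h)
  rcases Nat.even_or_odd' a with ⟨b, rfl | rfl⟩
  · have hb : (b : ℤ) ^ 2 ∣ m := by
      have h4 : ((2 * b : ℕ) : ℤ) ^ 2 = 4 * (b : ℤ) ^ 2 := by push_cast; ring
      exact (mul_dvd_mul_iff_left four_ne_zero).mp (h4 ▸ h)
    simp [hsq.eq_one_of_natCast_sq_dvd hb]
  · have hodd : IsCoprime ((2 * b + 1 : ℕ) : ℤ) 2 :=
      Int.isCoprime_two_right.mpr (by push_cast; exact odd_two_mul_add_one (b : ℤ))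
    have hcop : IsCoprime (((2 * b + 1 : ℕ) : ℤ) ^ 2) 4 := by
      simpa using hodd.pow (m := 2) (n := 2)
    exact Or.inl (hsq.eq_one_of_natCast_sq_dvd (hcop.dvd_of_dvd_mul_left h))

lemma not_four_mul {d : ℤ} (hd : IsFundamentalDiscriminant d) :
    ¬ IsFundamentalDiscriminant (4 * d) := by
  rintro (⟨hsq, -⟩ | ⟨m, hm, hsq, hmod⟩)
  · have := Int.isUnit_iff.mp (hsq 2 ⟨d, by ring⟩)
    omega
  obtain rfl : d = m := by omega
  rcases hd with ⟨-, h1⟩ | ⟨m', rfl, -, -⟩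
  · omega
  · have := Int.isUnit_iff.mp (hsq 2 ⟨m', by ring⟩)
    omega

lemma eq_of_mul_sq_eq {d₁ d₂ : ℤ} {l₁ l₂ : ℕ} (h₁ : IsFundamentalDiscriminant d₁)
    (h₂ : IsFundamentalDiscriminant d₂) (hl₁ : l₁ ≠ 0)
    (heq : d₁ * (l₁ : ℤ) ^ 2 = d₂ * (l₂ : ℤ) ^ 2) : d₁ = d₂ ∧ l₁ = l₂ := by
  obtain ⟨g, a₁, a₂, hg, hcop, rfl, rfl⟩ :=
    Nat.exists_coprime' (Nat.gcd_pos_of_pos_left l₂ (Nat.pos_of_ne_zero hl₁))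
  have hg0 : (g : ℤ) ^ 2 ≠ 0 := by positivity
  have key : d₁ * (a₁ : ℤ) ^ 2 = d₂ * (a₂ : ℤ) ^ 2 := by
    refine mul_left_cancel₀ hg0 ?_
    push_cast at heq
    linear_combination heq
  have hcop' : IsCoprime ((a₁ : ℤ) ^ 2) ((a₂ : ℤ) ^ 2) :=
    (Nat.isCoprime_iff_coprime.mpr hcop).pow
  have ha₁ := h₂.eq_one_or_two_of_sq_dvd
    (hcop'.dvd_of_dvd_mul_right ⟨d₁, by linear_combination -key⟩)
  have ha₂ := h₁.eq_one_or_two_of_sq_dvd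
    (hcop'.symm.dvd_of_dvd_mul_right ⟨d₂, by linear_combination key⟩)
  rcases ha₁ with rfl | rfl <;> rcases ha₂ with rfl | rfl
  · simpa using key
  · have h4 : d₁ = 4 * d₂ := by push_cast at key; linarith
    exact absurd (h4 ▸ h₁) h₂.not_four_mul
  · have h4 : d₂ = 4 * d₁ := by push_cast at key; linarith
    exact absurd (h4 ▸ h₂) h₁.not_four_mul
  · norm_num at hcop

end IsFundamentalDiscriminant

lemma psi_mul_sq {d : ℤ} {l : ℕ} (hd : IsFundamentalDiscriminant d) (hl : l ≠ 0) (m : ℕ) :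
    psi (d * (l : ℤ) ^ 2) m = kron d (m / m.gcd l) := by
  have hD : d * (l : ℤ) ^ 2 ≠ 0 := mul_ne_zero hd.ne_zero (by positivity)
  have hex : ∃ p : ℤ × ℕ,
      IsFundamentalDiscriminant p.1 ∧ d * (l : ℤ) ^ 2 = p.1 * (p.2 : ℤ) ^ 2 :=
    ⟨(d, l), hd, rfl⟩
  rw [psi, if_neg hD, dif_pos hex]
  obtain ⟨hd', heq⟩ := hex.choose_spec
  obtain ⟨hd, hl⟩ := hd.eq_of_mul_sq_eq hd' hl heq
  rw [← hd, ← hl]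

open ArithmeticFunction Finset

lemma coe_toArithmeticFunction {R : Type*} [Zero R] {f : ℕ → R} (hf : f 0 = 0) :
    ⇑(toArithmeticFunction f) = f := by
  ext n
  rcases eq_or_ne n 0 with rfl | hn
  · exact hf.symm
  · exact if_neg hn

lemma ArithmeticFunction.IsMultiplicative.sum_divisors_eq_prod {R : Type*} [CommSemiring R]
    {f : ArithmeticFunction R} (hf : f.IsMultiplicative) {n : ℕ} (hn : n ≠ 0) :
    ∑ d ∈ n.divisors, f d =
      ∏ p ∈ n.primeFactors, ∑ k ∈ range (n.factorization p + 1), f (p ^ k) := by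
  rw [← coe_mul_zeta_apply,
    (hf.mul isMultiplicative_zeta.natCast).multiplicative_factorization _ hn]
  exact prod_congr n.support_factorization fun p hp => by
    dsimp only
    rw [coe_mul_zeta_apply, Nat.sum_divisors_prime_pow (Nat.prime_of_mem_primeFactors hp)]

lemma Nat.Prime.gcd_pow_eq_pow_min {p l : ℕ} (hp : p.Prime) (k : ℕ) (hl : l ≠ 0) :
    Nat.gcd (p ^ k) l = p ^ min k (l.factorization p) := by
  obtain ⟨j, hjk, hj⟩ := (Nat.dvd_prime_pow hp).mp (Nat.gcd_dvd_left (p ^ k) l)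
  have hjl : j ≤ l.factorization p :=
    (hp.pow_dvd_iff_le_factorization hl).mp (hj ▸ Nat.gcd_dvd_right (p ^ k) l)
  have hmin : p ^ min k (l.factorization p) ∣ p ^ j := hj ▸
    Nat.dvd_gcd (pow_dvd_pow p (min_le_left _ _))
      ((hp.pow_dvd_iff_le_factorization hl).mpr (min_le_right _ _))
  rw [hj, le_antisymm (le_min hjk hjl) ((Nat.pow_dvd_pow_iff_le_right hp.one_lt).mp hmin)]

lemma sum_range_pow_sub_mul_ite {R : Type*} [CommRing R] (c : R) (k v : ℕ) :
    ∑ j ∈ range (k + 1), c ^ (k - j) * (if j = 0 then 1 else if j ≤ v then 1 - c else 0) =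
      c ^ (k - min k v) := by
  induction k with
  | zero => simp
  | succ k ih =>
    have hshift : ∑ j ∈ range (k + 1),
        c ^ (k + 1 - j) * (if j = 0 then 1 else if j ≤ v then 1 - c else 0) =
          c * ∑ j ∈ range (k + 1),
            c ^ (k - j) * (if j = 0 then 1 else if j ≤ v then 1 - c else 0) := by
      rw [mul_sum]
      refine sum_congr rfl fun j hj => ?_
      rw [Nat.sub_add_comm (mem_range_succ_iff.mp hj), pow_succ]
      ring
    rw [sum_range_succ, hshift, ih, Nat.sub_self, pow_zero, one_mul, if_neg k.succ_ne_zero]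
    split_ifs with h
    · rw [min_eq_left h, min_eq_left (Nat.le_of_succ_le h), Nat.sub_self, Nat.sub_self]
      ring
    · rw [min_eq_right (by omega), min_eq_right (by omega), add_zero, ← pow_succ',
        Nat.sub_add_comm (by omega)]

section PsiOf

variable {R : Type*} [CommRing R] (χ : ℕ →*₀ R) (l : ℕ)

lemma isMultiplicative_toArithmeticFunction_monoidWithZeroHom :
    (toArithmeticFunction ⇑χ).IsMultiplicative := by
  refine ⟨?_, fun {m n} _ => ?_⟩ <;> simp [coe_toArithmeticFunction (map_zero χ)]

/-- `n ↦ χ (n / gcd(n, l))`; for `χ = (d | ·)` this is `ψ_{d l²}`. -/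
noncomputable def psiOf : ArithmeticFunction R :=
  toArithmeticFunction fun n => χ (n / n.gcd l)

noncomputable def psiCorrection : ArithmeticFunction R :=
  toArithmeticFunction fun n => if n ∣ l then ∏ p ∈ n.primeFactors, (1 - χ p) else 0

variable {χ l}

lemma psiOf_apply {n : ℕ} (hn : n ≠ 0) : psiOf χ l n = χ (n / n.gcd l) := if_neg hn

lemma psiCorrection_apply {n : ℕ} (hn : n ≠ 0) :
    psiCorrection χ l n = if n ∣ l then ∏ p ∈ n.primeFactors, (1 - χ p) else 0 := if_neg hn

variable (χ l)

lemma isMultiplicative_psiOf : (psiOf χ l).IsMultiplicative := by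
  rw [IsMultiplicative.iff_ne_zero]
  refine ⟨by simp [psiOf_apply], fun {m n} hm hn hmn => ?_⟩
  rw [psiOf_apply (mul_ne_zero hm hn), psiOf_apply hm, psiOf_apply hn, ← map_mul, Nat.gcd_comm,
    Nat.Coprime.gcd_mul l hmn, Nat.gcd_comm l, Nat.gcd_comm l,
    Nat.div_mul_div_comm (Nat.gcd_dvd_left _ _) (Nat.gcd_dvd_left _ _)]

lemma isMultiplicative_psiCorrection : (psiCorrection χ l).IsMultiplicative := by
  rw [IsMultiplicative.iff_ne_zero]
  refine ⟨by simp [psiCorrection_apply], fun {m n} hm hn hmn => ?_⟩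
  rw [psiCorrection_apply (mul_ne_zero hm hn), psiCorrection_apply hm, psiCorrection_apply hn]
  by_cases hml : m ∣ l
  · by_cases hnl : n ∣ l
    · rw [if_pos (hmn.mul_dvd_of_dvd_of_dvd hml hnl), if_pos hml, if_pos hnl,
        Nat.primeFactors_mul hm hn, prod_union hmn.disjoint_primeFactors]
    · rw [if_neg fun h => hnl ((dvd_mul_left n m).trans h), if_neg hnl, mul_zero]
  · rw [if_neg fun h => hml ((dvd_mul_right m n).trans h), if_neg hml, zero_mul]

variable {χ l}

lemma psiOf_prime_pow {p : ℕ} (hp : p.Prime) (hl : l ≠ 0) (k : ℕ) :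
    psiOf χ l (p ^ k) = χ p ^ (k - min k (l.factorization p)) := by
  rw [psiOf_apply (pow_ne_zero k hp.ne_zero), hp.gcd_pow_eq_pow_min k hl,
    Nat.pow_div (min_le_left _ _) hp.pos, map_pow]

lemma psiCorrection_prime_pow {p : ℕ} (hp : p.Prime) (hl : l ≠ 0) (j : ℕ) :
    psiCorrection χ l (p ^ j) =
      if j = 0 then 1 else if j ≤ l.factorization p then 1 - χ p else 0 := by
  rw [psiCorrection_apply (pow_ne_zero j hp.ne_zero)]
  rcases eq_or_ne j 0 with rfl | hj
  · simp
  rw [if_neg hj, Nat.primeFactors_prime_pow hj hp, prod_singleton]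
  exact if_congr (hp.pow_dvd_iff_le_factorization hl) rfl rfl

theorem toArithmeticFunction_mul_psiCorrection (hl : l ≠ 0) :
    toArithmeticFunction ⇑χ * psiCorrection χ l = psiOf χ l := by
  refine (IsMultiplicative.eq_iff_eq_on_prime_powers _
    ((isMultiplicative_toArithmeticFunction_monoidWithZeroHom χ).mul
      (isMultiplicative_psiCorrection χ l)) _ (isMultiplicative_psiOf χ l)).mpr fun p k hp => ?_
  rw [mul_apply, Nat.sum_divisorsAntidiagonal'
      (f := fun a b => toArithmeticFunction χ a * psiCorrection χ l b),
    Nat.sum_divisors_prime_pow hp, psiOf_prime_pow hp hl,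
    ← sum_range_pow_sub_mul_ite (χ p) k (l.factorization p)]
  refine sum_congr rfl fun j hj => ?_
  rw [coe_toArithmeticFunction (map_zero χ),
    Nat.pow_div (Nat.le_of_lt_succ (mem_range.mp hj)) hp.pos, map_pow,
    psiCorrection_prime_pow hp hl]

end PsiOf

section LSeries

open LSeries

lemma LSeries.term_succ (f : ℕ → ℂ) (s : ℂ) (m : ℕ) :
    term f s (m + 1) = f (m + 1) * ((m + 1 : ℕ) : ℂ) ^ (-s) := by
  rw [term_of_ne_zero m.succ_ne_zero, Complex.cpow_neg, div_eq_mul_inv]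

lemma LSeriesSummable.summable_norm_succ {f : ℕ → ℂ} {s : ℂ} (hf : LSeriesSummable f s) :
    Summable fun m : ℕ => ‖f (m + 1) * ((m + 1 : ℕ) : ℂ) ^ (-s)‖ := by
  simpa only [term_succ] using (summable_nat_add_iff 1).mpr hf.norm

lemma LSeriesSummable.LSeries_eq_tsum_succ {f : ℕ → ℂ} {s : ℂ} (hf : LSeriesSummable f s) :
    LSeries f s = ∑' m : ℕ, f (m + 1) * ((m + 1 : ℕ) : ℂ) ^ (-s) := by
  rw [LSeries, hf.tsum_eq_zero_add, term_zero, zero_add]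
  simp only [term_succ]

lemma ArithmeticFunction.IsMultiplicative.toArithmeticFunction_term {f : ArithmeticFunction ℂ}
    (hf : f.IsMultiplicative) (s : ℂ) : (toArithmeticFunction (term f s)).IsMultiplicative := by
  rw [IsMultiplicative.iff_ne_zero]
  refine ⟨by simp [toArithmeticFunction, term_of_ne_zero, hf.map_one], fun {m n} hm hn hmn => ?_⟩
  simp only [toArithmeticFunction, coe_mk, mul_ne_zero hm hn, hm, hn, if_false,
    term_of_ne_zero (mul_ne_zero hm hn), term_of_ne_zero hm, term_of_ne_zero hn,
    hf.map_mul_of_coprime hmn, Nat.cast_mul, Complex.natCast_mul_natCast_cpow]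
  ring

variable {χ : ℕ →*₀ ℂ} {l : ℕ}

lemma term_psiCorrection_eq_zero (hl : l ≠ 0) (s : ℂ) {n : ℕ} (hn : n ∉ l.divisors) :
    term (psiCorrection χ l) s n = 0 := by
  rcases eq_or_ne n 0 with rfl | hn0
  · exact term_zero _ _
  · rw [term_of_ne_zero hn0, psiCorrection_apply hn0,
      if_neg fun h => hn (Nat.mem_divisors.mpr ⟨h, hl⟩), zero_div]

lemma LSeriesSummable_psiCorrection (hl : l ≠ 0) (s : ℂ) :
    LSeriesSummable (psiCorrection χ l) s :=
  summable_of_ne_finset_zero fun _ hn => term_psiCorrection_eq_zero hl s hn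

lemma term_psiCorrection_prime_pow {p : ℕ} (hp : p.Prime) (hl : l ≠ 0) (s : ℂ) {j : ℕ}
    (hj0 : j ≠ 0) (hj : j ≤ l.factorization p) :
    term (psiCorrection χ l) s (p ^ j) = (1 - χ p) * (p : ℂ) ^ (-(j : ℂ) * s) := by
  rw [term_of_ne_zero (pow_ne_zero _ hp.ne_zero), psiCorrection_prime_pow hp hl,
    if_neg hj0, if_pos hj, neg_mul, ← mul_neg, Complex.natCast_cpow_natCast_mul,
    Complex.cpow_neg, div_eq_mul_inv, Nat.cast_pow]

lemma LSeries_psiCorrection (hl : l ≠ 0) (s : ℂ) :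
    LSeries (psiCorrection χ l) s =
      ∏ p ∈ l.primeFactors,
        (1 + (1 - χ p) * ∑ j ∈ Icc 1 (l.factorization p), (p : ℂ) ^ (-(j : ℂ) * s)) := by
  have hterm := (isMultiplicative_psiCorrection χ l).toArithmeticFunction_term s
  rw [LSeries, tsum_eq_sum fun _ hn => term_psiCorrection_eq_zero hl s hn,
    ← coe_toArithmeticFunction (term_zero _ s), hterm.sum_divisors_eq_prod hl]
  refine prod_congr rfl fun p hp => ?_
  have hpp := Nat.prime_of_mem_primeFactors hp
  have hone : term (psiCorrection χ l) s 1 = 1 := by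
    rw [term_of_ne_zero one_ne_zero, (isMultiplicative_psiCorrection χ l).map_one, Nat.cast_one,
      Complex.one_cpow, div_one]
  rw [coe_toArithmeticFunction (term_zero _ s), Nat.range_succ_eq_Icc_zero,
    ← insert_Icc_add_one_left_eq_Icc (Nat.zero_le _), sum_insert (by simp), zero_add, pow_zero,
    hone, mul_sum]
  refine congrArg (1 + ·) (sum_congr rfl fun j hj => ?_)
  obtain ⟨hj1, hjv⟩ := mem_Icc.mp hj
  exact term_psiCorrection_prime_pow hpp hl s (by omega) hjv

variable (χ)

lemma LSeriesSummable_psiOf (hl : l ≠ 0) {s : ℂ} (hχ : LSeriesSummable χ s) :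
    LSeriesSummable (psiOf χ l) s := by
  rw [← toArithmeticFunction_mul_psiCorrection hl]
  exact LSeriesSummable_mul (by rwa [coe_toArithmeticFunction (map_zero χ)])
    (LSeriesSummable_psiCorrection hl s)

theorem LSeries_psiOf (hl : l ≠ 0) {s : ℂ} (hχ : LSeriesSummable χ s) :
    LSeries (psiOf χ l) s =
      LSeries χ s * ∏ p ∈ l.primeFactors,
        (1 + (1 - χ p) * ∑ j ∈ Icc 1 (l.factorization p), (p : ℂ) ^ (-(j : ℂ) * s)) := by
  have hχ' : LSeriesSummable (toArithmeticFunction χ) s := by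
    rwa [coe_toArithmeticFunction (map_zero χ)]
  rw [← toArithmeticFunction_mul_psiCorrection hl,
    LSeries_mul' hχ' (LSeriesSummable_psiCorrection hl s), LSeries_psiCorrection hl,
    coe_toArithmeticFunction (map_zero χ)]

end LSeries

/-- For a discriminant `D = dℓ²` (`d` fundamental, `ℓ > 0`) and `Re(s) > 1`,
`Σ_{m≥1} ψ_D(m) m^{-s} = L(s, χ_d) ∏_{p ∣ ℓ} (1 + (1 - χ_d(p)) Σ_{j=1}^{ord_p(ℓ)} p^{-js})`,
where `χ_d = (d | ·)` is the Kronecker symbol and `L(s, χ_d)` is its Dirichlet series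
(which is the Dirichlet `L`-function of `χ_d` in this region). -/
theorem Lseries_psi_factorization (d : ℤ) (ℓ : ℕ)
    (hd : IsFundamentalDiscriminant d) (hℓ : 0 < ℓ) (s : ℂ) (hs : 1 < s.re) :
    Summable (fun m : ℕ => ‖(psi (d * (ℓ : ℤ) ^ 2) (m + 1) : ℂ) * ((m + 1 : ℕ) : ℂ) ^ (-s)‖) ∧
    (∑' m : ℕ, (psi (d * (ℓ : ℤ) ^ 2) (m + 1) : ℂ) * ((m + 1 : ℕ) : ℂ) ^ (-s)) =
      (∑' n : ℕ, (kron d (n + 1) : ℂ) * ((n + 1 : ℕ) : ℂ) ^ (-s)) *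
        ∏ p ∈ ℓ.primeFactors,
          (1 + (1 - (kron d p : ℂ)) *
            ∑ j ∈ Finset.Icc 1 (ℓ.factorization p), ((p : ℕ) : ℂ) ^ (-(j : ℂ) * s)) := by
  have hℓ0 : ℓ ≠ 0 := hℓ.ne'
  have hχ : LSeriesSummable (kronChar d) s :=
    LSeriesSummable_of_bounded_of_one_lt_re (fun n _ => norm_kronChar_le_one d n) hs
  have hψ : ∀ m : ℕ, (psi (d * (ℓ : ℤ) ^ 2) (m + 1) : ℂ) = psiOf (kronChar d) ℓ (m + 1) :=
    fun m => by rw [psi_mul_sq hd hℓ0, psiOf_apply m.succ_ne_zero,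
      kronChar_of_ne_zero d (Nat.div_gcd_pos_of_pos_left ℓ m.succ_pos).ne']
  have hkron : ∀ n ≠ 0, (kron d n : ℂ) = kronChar d n :=
    fun n hn => (kronChar_of_ne_zero d hn).symm
  have hψ_summable := LSeriesSummable_psiOf (kronChar d) hℓ0 hχ
  simp only [hψ, hkron _ (Nat.succ_ne_zero _)]
  refine ⟨hψ_summable.summable_norm_succ, ?_⟩
  rw [← hψ_summable.LSeries_eq_tsum_succ, ← hχ.LSeries_eq_tsum_succ, LSeries_psiOf _ hℓ0 hχ]
  exact congrArg _ (prod_congr rfl fun p hp => by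
    rw [hkron p (Nat.prime_of_mem_primeFactors hp).ne_zero])
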